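/- In ℂ[x,y] one has the identity (4/5)·(x² + (5+2√5)y²)⁵ + (1/5)·(x⁵ − (50+20√5)x³y² + (225+100√5)xy⁴)² = x¹⁰ + (1350+600√5)x⁶y⁴ − (5100+2280√5)x⁴y⁶ + (36225+16200√5)x²y⁸ + (30500+13640√5)y¹⁰. In particular, the polynomial W₁₀ᴱ(x,y) := (4/5)W_{2,q}(x,y)⁵ + (1/5)ψ₅(x,y)² has the form x¹⁰ + Σ_{i=4}^{10} A_i x^{10−i}y^i with A₄ = 1350+600√5 ≠ 0, so it attains d = 4 = 2⌊10/10⌋ + 2 and is the extremal invariant polynomial of degree 10. -/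
import Mathlib


/- STATEMENT 6: the identity
(4/5)W_{2,q}⁵ + (1/5)ψ₅² = x¹⁰ + (1350+600√5)x⁶y⁴ - (5100+2280√5)x⁴y⁶
  + (36225+16200√5)x²y⁸ + (30500+13640√5)y¹⁰ in ℂ[x,y];
in particular W₁₀ᴱ has the form x¹⁰ + ∑_{i=4}^{10} A_i x^{10-i}y^i with
A₄ = 1350+600√5 ≠ 0, attaining d = 4 = 2⌊10/10⌋+2. -/

noncomputable section

abbrev Cxy : Type := MvPolynomial (Fin 2) ℂ

def sqrt5C : ℂ := (Real.sqrt 5 : ℝ)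

def W2q : Cxy :=
  MvPolynomial.X 0 ^ 2 + MvPolynomial.C (5 + 2 * sqrt5C) * MvPolynomial.X 1 ^ 2

def psi5 : Cxy :=
  MvPolynomial.X 0 ^ 5
    - MvPolynomial.C (50 + 20 * sqrt5C) * MvPolynomial.X 0 ^ 3 * MvPolynomial.X 1 ^ 2
    + MvPolynomial.C (225 + 100 * sqrt5C) * MvPolynomial.X 0 * MvPolynomial.X 1 ^ 4

theorem deg10_extremal_identity :
    MvPolynomial.C (4 / 5 : ℂ) * W2q ^ 5 + MvPolynomial.C (1 / 5 : ℂ) * psi5 ^ 2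
      = MvPolynomial.X 0 ^ 10
        + MvPolynomial.C (1350 + 600 * sqrt5C) * MvPolynomial.X 0 ^ 6 * MvPolynomial.X 1 ^ 4
        - MvPolynomial.C (5100 + 2280 * sqrt5C) * MvPolynomial.X 0 ^ 4 * MvPolynomial.X 1 ^ 6
        + MvPolynomial.C (36225 + 16200 * sqrt5C) * MvPolynomial.X 0 ^ 2 * MvPolynomial.X 1 ^ 8
        + MvPolynomial.C (30500 + 13640 * sqrt5C) * MvPolynomial.X 1 ^ 10 ∧
    (1350 + 600 * sqrt5C) ≠ 0 ∧ 4 = 2 * (10 / 10 : ℕ) + 2 := by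
  have hs : sqrt5C ^ 2 = 5 := by
    rw [sqrt5C, ← Complex.ofReal_pow, Real.sq_sqrt (by norm_num : (0:ℝ) ≤ 5)]
    norm_num
  refine ⟨?_, ?_, rfl⟩
  · apply MvPolynomial.funext
    intro v
    simp only [W2q, psi5, map_add, map_sub, map_mul, map_pow, MvPolynomial.eval_C,
      MvPolynomial.eval_X, MvPolynomial.eval_add, MvPolynomial.eval_sub, MvPolynomial.eval_mul,
      MvPolynomial.eval_pow]
    set x : ℂ := v 0
    set y : ℂ := v 1
    set s : ℂ := sqrt5C
    linear_combination ((5600)*y^10 + (1728)*y^10*s + (320)*y^10*s^2 + ((128:ℂ)/5)*y^10*s^3 + (4720)*x^2*y^8 + (640)*x^2*y^8*s + (64)*x^2*y^8*s^2 + (-320)*x^4*y^6 + (64)*x^4*y^6*s + (112)*x^6*y^4) * hs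
  · intro h
    have hre := congrArg Complex.re h
    simp [sqrt5C, Complex.add_re, Complex.mul_re] at hre
    nlinarith [Real.sqrt_nonneg 5, hre]

end
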